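/- Counterexample showing infima over generators do not suffice for Hausdorff-Kantorovich distances on convex sets: let X = {x,y,z} with d the discrete metric (all distinct distances 1), μ₁ = (2/3)x + (1/3)y, μ₂ = (2/3)y + (1/3)z, μ₃ = (2/3)z + (1/3)x, and B = conv{μ₂, μ₃}. Then min(W(μ₁, μ₂), W(μ₁, μ₃)) > inf_{ν∈B} W(μ₁, ν); in particular W(μ₁, (1/2)μ₂ + (1/2)μ₃) = 1/2 while W(μ₁, μ₂) = W(μ₁, μ₃) = 2/3. -/

import Mathlib

/-- Expected value of `f` under the distribution `μ` on `Fin 3`. -/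
noncomputable def expec (μ : Fin 3 → ℝ) (f : Fin 3 → ℝ) : ℝ :=
  ∑ x, μ x * f x

/-- Discrete metric on `Fin 3`. -/
noncomputable def dDisc (x y : Fin 3) : ℝ := if x = y then 0 else 1

/-- Kantorovich-Wasserstein distance on distributions over `Fin 3` with the
discrete metric. -/
noncomputable def wassDist (μ ν : Fin 3 → ℝ) : ℝ :=
  sSup {v : ℝ | ∃ f : Fin 3 → ℝ, (∀ x, f x ∈ Set.Icc (0:ℝ) 1) ∧
    (∀ x y, |f x - f y| ≤ dDisc x y) ∧ v = expec ν f - expec μ f}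

lemma lip_of_Icc (f : Fin 3 → ℝ) (h : ∀ x, f x ∈ Set.Icc (0:ℝ) 1) :
    ∀ x y, |f x - f y| ≤ dDisc x y := by
  intro x y
  unfold dDisc
  by_cases hxy : x = y
  · simp [hxy]
  · rw [if_neg hxy, abs_le]
    have hx := h x; have hy := h y
    simp only [Set.mem_Icc] at hx hy
    constructor <;> linarith [hx.1, hx.2, hy.1, hy.2]

lemma wass_eq (μ ν : Fin 3 → ℝ) (c : ℝ)
    (hub : ∀ f : Fin 3 → ℝ, (∀ x, f x ∈ Set.Icc (0:ℝ) 1) →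
      expec ν f - expec μ f ≤ c)
    (f₀ : Fin 3 → ℝ) (h0 : ∀ x, f₀ x ∈ Set.Icc (0:ℝ) 1)
    (hval : expec ν f₀ - expec μ f₀ = c) : wassDist μ ν = c := by
  have hmem : c ∈ {v : ℝ | ∃ f : Fin 3 → ℝ, (∀ x, f x ∈ Set.Icc (0:ℝ) 1) ∧
      (∀ x y, |f x - f y| ≤ dDisc x y) ∧ v = expec ν f - expec μ f} :=
    ⟨f₀, h0, lip_of_Icc f₀ h0, hval.symm⟩
  apply le_antisymm
  · apply csSup_le ⟨c, hmem⟩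
    rintro v ⟨f, hf, -, rfl⟩
    exact hub f hf
  · exact le_csSup ⟨c, by rintro v ⟨f, hf, -, rfl⟩; exact hub f hf⟩ hmem

lemma wass_nonneg (μ ν : Fin 3 → ℝ) (hμ : ∀ x, 0 ≤ μ x) (hν : ∀ x, 0 ≤ ν x) :
    0 ≤ wassDist μ ν := by
  apply le_csSup
  · refine ⟨∑ x, ν x, ?_⟩
    rintro v ⟨f, hf, -, rfl⟩
    have h1 : expec ν f ≤ ∑ x, ν x := by
      apply Finset.sum_le_sum
      intro i _
      have := (hf i).2
      nlinarith [hν i, (hf i).1]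
    have h2 : 0 ≤ expec μ f := by
      apply Finset.sum_nonneg
      intro i _
      exact mul_nonneg (hμ i) (hf i).1
    linarith
  · exact ⟨fun _ => 0, fun x => by simp, lip_of_Icc _ (fun x => by simp),
      by simp [expec]⟩

lemma w23a : wassDist ![2/3, 1/3, 0] ![0, 2/3, 1/3] = 2/3 := by
  apply wass_eq _ _ _ ?_ ![0, 1, 1] ?_ ?_
  · intro f hf
    have h0 := hf 0; have h1 := hf 1; have h2 := hf 2
    simp only [Set.mem_Icc] at h0 h1 h2
    simp only [expec, Fin.sum_univ_three, Matrix.cons_val_zero, Matrix.cons_val_one,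
      Matrix.head_cons, Matrix.cons_val_two, Matrix.tail_cons]
    linarith [h0.1, h0.2, h1.1, h1.2, h2.1, h2.2]
  · intro x; fin_cases x <;> norm_num
  · norm_num [expec, Fin.sum_univ_three, Matrix.cons_val_two, Matrix.tail_cons, Matrix.head_cons]

lemma w23b : wassDist ![2/3, 1/3, 0] ![1/3, 0, 2/3] = 2/3 := by
  apply wass_eq _ _ _ ?_ ![0, 0, 1] ?_ ?_
  · intro f hf
    have h0 := hf 0; have h1 := hf 1; have h2 := hf 2
    simp only [Set.mem_Icc] at h0 h1 h2
    simp only [expec, Fin.sum_univ_three, Matrix.cons_val_zero, Matrix.cons_val_one,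
      Matrix.head_cons, Matrix.cons_val_two, Matrix.tail_cons]
    linarith [h0.1, h0.2, h1.1, h1.2, h2.1, h2.2]
  · intro x; fin_cases x <;> norm_num
  · norm_num [expec, Fin.sum_univ_three, Matrix.cons_val_two, Matrix.tail_cons, Matrix.head_cons]

lemma wmid : wassDist ![2/3, 1/3, 0]
    (fun x => (1/2) * ![(0:ℝ), 2/3, 1/3] x + (1/2) * ![(1:ℝ)/3, 0, 2/3] x) = 1/2 := by
  apply wass_eq _ _ _ ?_ ![0, 0, 1] ?_ ?_
  · intro f hf
    have h0 := hf 0; have h1 := hf 1; have h2 := hf 2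
    simp only [Set.mem_Icc] at h0 h1 h2
    simp only [expec, Fin.sum_univ_three, Matrix.cons_val_zero, Matrix.cons_val_one,
      Matrix.head_cons, Matrix.cons_val_two, Matrix.tail_cons]
    linarith [h0.1, h0.2, h1.1, h1.2, h2.1, h2.2]
  · intro x; fin_cases x <;> norm_num
  · norm_num [expec, Fin.sum_univ_three, Matrix.cons_val_two, Matrix.tail_cons, Matrix.head_cons]

theorem generators_do_not_suffice :
    (min (wassDist ![2/3, 1/3, 0] ![0, 2/3, 1/3])
         (wassDist ![2/3, 1/3, 0] ![1/3, 0, 2/3]) >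
      sInf {w : ℝ | ∃ ν : Fin 3 → ℝ, (∃ p : ℝ, 0 ≤ p ∧ p ≤ 1 ∧
        ν = fun x => p * ![(0:ℝ), 2/3, 1/3] x + (1 - p) * ![(1:ℝ)/3, 0, 2/3] x) ∧
        w = wassDist ![2/3, 1/3, 0] ν}) ∧
    wassDist ![2/3, 1/3, 0]
      (fun x => (1/2) * ![(0:ℝ), 2/3, 1/3] x + (1/2) * ![(1:ℝ)/3, 0, 2/3] x) = 1/2 ∧
    wassDist ![2/3, 1/3, 0] ![0, 2/3, 1/3] = 2/3 ∧
    wassDist ![2/3, 1/3, 0] ![1/3, 0, 2/3] = 2/3 := by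
  refine ⟨?_, wmid, w23a, w23b⟩
  rw [w23a, w23b]
  have hle : sInf {w : ℝ | ∃ ν : Fin 3 → ℝ, (∃ p : ℝ, 0 ≤ p ∧ p ≤ 1 ∧
      ν = fun x => p * ![(0:ℝ), 2/3, 1/3] x + (1 - p) * ![(1:ℝ)/3, 0, 2/3] x) ∧
      w = wassDist ![2/3, 1/3, 0] ν} ≤ 1/2 := by
    apply csInf_le
    · refine ⟨0, ?_⟩
      rintro w ⟨ν, ⟨p, hp0, hp1, rfl⟩, rfl⟩
      apply wass_nonneg
      · intro x; fin_cases x <;> norm_num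
      · intro x; fin_cases x <;> simp <;> nlinarith
    · exact ⟨(fun x => (1/2) * ![(0:ℝ), 2/3, 1/3] x + (1/2) * ![(1:ℝ)/3, 0, 2/3] x),
        ⟨1/2, by norm_num, by norm_num, by funext x; norm_num⟩, wmid.symm⟩
  norm_num
  linarith
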